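/- For all x ∈ ℝ and all μ ∈ ℝ, the partial derivative of f_μ(x) with respect to μ equals ((x−μ)/σ²)·f_μ(x) + f_μ(x)·Σ_{i=1}^k (h(b_i) − h(a_i)). -/

import Mathlib

open MeasureTheory ProbabilityTheory Set Filter Topology

noncomputable def stdphi (x : ℝ) : ℝ := Real.exp (-(x ^ 2) / 2) / Real.sqrt (2 * Real.pi)

noncomputable def stdPhi (x : ℝ) : ℝ := ∫ t in Iic x, stdphi t

noncomputable def stdPhiInv : ℝ → ℝ := Function.invFun stdPhi

noncomputable def stdPhiE (c : EReal) (x s : ℝ) : ℝ :=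
  if c = ⊤ then 1 else if c = ⊥ then 0 else stdPhi ((c.toReal - x) / s)

def truncOrdered {k : ℕ} (a b : Fin k → EReal) : Prop :=
  (∀ i, a i < b i) ∧ ∀ i j : Fin k, i < j → b i < a j

def truncSet {k : ℕ} (a b : Fin k → EReal) : Set ℝ :=
  {x : ℝ | ∃ i, a i < (x : EReal) ∧ (x : EReal) < b i}

noncomputable def truncSum {k : ℕ} (a b : Fin k → EReal) (s x : ℝ) : ℝ :=
  ∑ i, (stdPhiE (b i) x s - stdPhiE (a i) x s)

noncomputable def condPDF {k : ℕ} (a b : Fin k → EReal) (σ τ μ x : ℝ) : ℝ :=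
  (1 / σ) * stdphi ((x - μ) / σ) * truncSum a b τ x
    / truncSum a b (Real.sqrt (σ ^ 2 + τ ^ 2)) μ

noncomputable def Fmu {k : ℕ} (a b : Fin k → EReal) (σ τ μ x : ℝ) : ℝ :=
  ∫ u in Iic x, condPDF a b σ τ μ u

/-- `G_μ(x,v) = Φ((x - (ρ²μ + (1-ρ²)v))/(σρ))` with `ρ² = τ²/(σ²+τ²)`. -/
noncomputable def Gfun (σ τ μ x v : ℝ) : ℝ :=
  stdPhi ((x - (τ ^ 2 / (σ ^ 2 + τ ^ 2) * μ + (1 - τ ^ 2 / (σ ^ 2 + τ ^ 2)) * v)) /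
    (σ * Real.sqrt (τ ^ 2 / (σ ^ 2 + τ ^ 2))))

/-- `G_μ(x,v)` for an extended-real `v`, with the natural conventions at `±∞`. -/
noncomputable def GfunE (σ τ μ x : ℝ) (c : EReal) : ℝ :=
  if c = ⊤ then 0 else if c = ⊥ then 1 else Gfun σ τ μ x c.toReal

/-- `h(v)` from Lemma `le_dmu_formula`. -/
noncomputable def hfun {k : ℕ} (a b : Fin k → EReal) (σ τ μ v : ℝ) : ℝ :=
  (1 / Real.sqrt (σ ^ 2 + τ ^ 2)) * stdphi ((v - μ) / Real.sqrt (σ ^ 2 + τ ^ 2)) /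
    truncSum a b (Real.sqrt (σ ^ 2 + τ ^ 2)) μ

/-- `h(v)` for an extended-real `v`, with the convention `φ(±∞) = 0`. -/
noncomputable def hfunE {k : ℕ} (a b : Fin k → EReal) (σ τ μ : ℝ) (c : EReal) : ℝ :=
  if c = ⊤ then 0 else if c = ⊥ then 0 else hfun a b σ τ μ c.toReal

/-- `l(x,v)` from Lemma `le_dens_dx`. -/
noncomputable def lfun {k : ℕ} (a b : Fin k → EReal) (τ x v : ℝ) : ℝ :=
  (1 / τ) * stdphi ((v - x) / τ) / truncSum a b τ x

/-- `l(x,v)` for an extended-real `v`, with the convention `φ(±∞) = 0`. -/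
noncomputable def lfunE {k : ℕ} (a b : Fin k → EReal) (τ x : ℝ) (c : EReal) : ℝ :=
  if c = ⊤ then 0 else if c = ⊥ then 0 else lfun a b τ x c.toReal

/-- The function `B_μ(x)` from the proof of Proposition 1. -/
noncomputable def Bfun {k : ℕ} (a b : Fin k → EReal) (σ τ μ x : ℝ) : ℝ :=
  Real.sqrt (τ ^ 2 / (σ ^ 2 + τ ^ 2)) / σ * stdphi (stdPhiInv (Fmu a b σ τ μ x))
    - condPDF a b σ τ μ x
    + ∑ i, (hfunE a b σ τ μ (b i) * (Fmu a b σ τ μ x - GfunE σ τ μ x (b i))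
        - hfunE a b σ τ μ (a i) * (Fmu a b σ τ μ x - GfunE σ τ μ x (a i)))

/-! The density `f_μ(x) = N(μ) / D(μ)` is a quotient in which only the Gaussian factor
`φ((x - μ)/σ)` of `N` and the normalising constant `D(μ) = P(μ + √(σ² + τ²) Z ∈ T)` depend on `μ`.
The Gaussian factor has logarithmic derivative `(x - μ)/σ²`, and moving `μ` shifts every endpoint
`(c - μ)/√(σ² + τ²)` of `D`, so `D'(μ) = -D(μ) ∑ᵢ (h(bᵢ) - h(aᵢ))`. The quotient rule then gives the
formula; `D(μ) > 0` because `T` contains a nonempty interval. -/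

lemma stdphi_pos (x : ℝ) : 0 < stdphi x := by
  unfold stdphi; positivity

lemma continuous_stdphi : Continuous stdphi := by
  unfold stdphi; fun_prop

lemma hasDerivAt_stdphi (y : ℝ) : HasDerivAt stdphi (-y * stdphi y) y := by
  unfold stdphi
  exact ((((hasDerivAt_pow 2 y).neg).div_const 2).exp.div_const _).congr_deriv (by simp; ring)

lemma stdphi_eq_exp_neg_mul_sq (x : ℝ) :
    stdphi x = Real.exp (-2⁻¹ * x ^ 2) / Real.sqrt (2 * Real.pi) := by
  unfold stdphi; congr 2; ring

lemma integrable_stdphi : Integrable stdphi := by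
  simp only [funext stdphi_eq_exp_neg_mul_sq]
  exact (integrable_exp_neg_mul_sq (by norm_num)).div_const _

lemma integral_stdphi : ∫ x, stdphi x = 1 := by
  simp only [stdphi_eq_exp_neg_mul_sq, integral_div, integral_gaussian]
  field_simp

lemma stdPhi_sub_stdPhi (u v : ℝ) : stdPhi v - stdPhi u = ∫ t in u..v, stdphi t :=
  intervalIntegral.integral_Iic_sub_Iic integrable_stdphi.integrableOn
    integrable_stdphi.integrableOn

lemma hasDerivAt_stdPhi (x : ℝ) : HasDerivAt stdPhi (stdphi x) x := by
  have h : stdPhi = fun y => stdPhi 0 + ∫ t in (0 : ℝ)..y, stdphi t := by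
    funext y; linarith [stdPhi_sub_stdPhi 0 y]
  rw [h]
  exact (intervalIntegral.integral_hasDerivAt_right integrable_stdphi.intervalIntegrable
    (continuous_stdphi.stronglyMeasurableAtFilter _ _) continuous_stdphi.continuousAt).const_add _

lemma stdPhi_strictMono : StrictMono stdPhi := fun u v huv => by
  have := intervalIntegral.intervalIntegral_pos_of_pos_on
    integrable_stdphi.intervalIntegrable (fun t _ => stdphi_pos t) huv
  linarith [stdPhi_sub_stdPhi u v]

lemma stdPhi_pos (x : ℝ) : 0 < stdPhi x :=
  (setIntegral_nonneg measurableSet_Iic fun t _ => (stdphi_pos t).le).trans_lt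
    (stdPhi_strictMono (sub_one_lt x))

lemma stdPhi_lt_one (x : ℝ) : stdPhi x < 1 :=
  (stdPhi_strictMono (lt_add_one x)).trans_le <| integral_stdphi ▸
    setIntegral_le_integral integrable_stdphi (Eventually.of_forall fun t => (stdphi_pos t).le)

lemma hasDerivAt_stdphi_div_sub (x σ μ : ℝ) :
    HasDerivAt (fun m => stdphi ((x - m) / σ)) ((x - μ) / σ ^ 2 * stdphi ((x - μ) / σ)) μ :=
  ((hasDerivAt_stdphi _).comp μ (((hasDerivAt_id μ).const_sub x).div_const σ)).congr_deriv
    (by simp only [id]; ring)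

noncomputable def stdphiE (c : EReal) (x s : ℝ) : ℝ :=
  if c = ⊤ then 0 else if c = ⊥ then 0 else stdphi ((c.toReal - x) / s)

lemma hasDerivAt_stdPhiE (c : EReal) (s μ : ℝ) :
    HasDerivAt (fun m => stdPhiE c m s) (-(stdphiE c μ s / s)) μ := by
  rcases eq_or_ne c ⊤ with hc | hc
  · simpa [stdPhiE, stdphiE, hc] using hasDerivAt_const μ (1 : ℝ)
  rcases eq_or_ne c ⊥ with hc' | hc'
  · simpa [stdPhiE, stdphiE, hc, hc'] using hasDerivAt_const μ (0 : ℝ)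
  simp only [stdPhiE, stdphiE, hc, hc', if_false]
  exact ((hasDerivAt_stdPhi _).comp μ
    (((hasDerivAt_id μ).const_sub c.toReal).div_const s)).congr_deriv (by simp only [id]; ring)

lemma stdPhiE_lt_stdPhiE {c d : EReal} (h : c < d) (x : ℝ) {s : ℝ} (hs : 0 < s) :
    stdPhiE c x s < stdPhiE d x s := by
  unfold stdPhiE
  rcases eq_or_ne c ⊥ with hc | hc <;> rcases eq_or_ne d ⊤ with hd | hd
  · simp [hc, hd]
  · simpa [hc, hd, h.ne_bot] using stdPhi_pos _
  · simpa [h.ne_top, hc, hd] using stdPhi_lt_one _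
  · simp only [h.ne_top, hc, hd, h.ne_bot, if_false]
    have hcd : c.toReal < d.toReal := by
      rwa [← EReal.coe_lt_coe_iff, EReal.coe_toReal h.ne_top hc, EReal.coe_toReal hd h.ne_bot]
    exact stdPhi_strictMono (by gcongr)

lemma truncSum_pos {k : ℕ} {a b : Fin (k + 1) → EReal} (hab : truncOrdered a b)
    {s : ℝ} (hs : 0 < s) (x : ℝ) : 0 < truncSum a b s x :=
  Finset.sum_pos (fun i _ => sub_pos.mpr (stdPhiE_lt_stdPhiE (hab.1 i) x hs))
    Finset.univ_nonempty

lemma hasDerivAt_truncSum {k : ℕ} (a b : Fin k → EReal) (s μ : ℝ) :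
    HasDerivAt (fun m => truncSum a b s m)
      (-(∑ i, (stdphiE (b i) μ s - stdphiE (a i) μ s)) / s) μ := by
  unfold truncSum
  refine (HasDerivAt.fun_sum fun i _ =>
    (hasDerivAt_stdPhiE (b i) s μ).sub (hasDerivAt_stdPhiE (a i) s μ)).congr_deriv ?_
  simp only [neg_div, Finset.sum_div, ← Finset.sum_neg_distrib, sub_div]
  exact Finset.sum_congr rfl fun i _ => by ring

lemma sum_hfunE_sub {k : ℕ} (a b : Fin k → EReal) (σ τ μ : ℝ) :
    ∑ i, (hfunE a b σ τ μ (b i) - hfunE a b σ τ μ (a i)) =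
      (∑ i, (stdphiE (b i) μ √(σ ^ 2 + τ ^ 2) - stdphiE (a i) μ √(σ ^ 2 + τ ^ 2)))
        / √(σ ^ 2 + τ ^ 2) / truncSum a b √(σ ^ 2 + τ ^ 2) μ := by
  have hfunE_eq (c : EReal) : hfunE a b σ τ μ c = stdphiE c μ √(σ ^ 2 + τ ^ 2)
      / √(σ ^ 2 + τ ^ 2) / truncSum a b √(σ ^ 2 + τ ^ 2) μ := by
    unfold hfunE hfun stdphiE
    split_ifs <;> ring
  simp only [hfunE_eq, ← sub_div, Finset.sum_div]

theorem stmt15_general {k : ℕ} (a b : Fin (k + 1) → EReal) (hab : truncOrdered a b)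
    (σ τ : ℝ) (hσ : 0 < σ) (x μ : ℝ) :
    HasDerivAt (fun m => condPDF a b σ τ m x)
      ((x - μ) / σ ^ 2 * condPDF a b σ τ μ x
        + condPDF a b σ τ μ x * ∑ i, (hfunE a b σ τ μ (b i) - hfunE a b σ τ μ (a i))) μ := by
  have hD := (truncSum_pos hab (by positivity : 0 < √(σ ^ 2 + τ ^ 2)) μ).ne'
  have hN := ((hasDerivAt_stdphi_div_sub x σ μ).const_mul (1 / σ)).mul_const (truncSum a b τ x)
  refine (hN.div (hasDerivAt_truncSum a b _ μ) hD).congr_deriv ?_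
  rw [sum_hfunE_sub]
  unfold condPDF
  field_simp
  ring

/-- Lemma (`le_dens_dmu`): `∂f_μ(x)/∂μ = ((x-μ)/σ²) f_μ(x) + f_μ(x) ∑ᵢ (h(bᵢ) - h(aᵢ))`. -/
theorem stmt15 {k : ℕ} (a b : Fin (k + 1) → EReal) (hab : truncOrdered a b)
    (σ τ : ℝ) (hσ : 0 < σ) (hτ : 0 < τ) (x μ : ℝ) :
    HasDerivAt (fun m => condPDF a b σ τ m x)
      ((x - μ) / σ ^ 2 * condPDF a b σ τ μ x
        + condPDF a b σ τ μ x * ∑ i, (hfunE a b σ τ μ (b i) - hfunE a b σ τ μ (a i))) μ :=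
  stmt15_general a b hab σ τ hσ x μ
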